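/- Superposition principle for bilinear potentials: let φ^k, φ^l, ψ^i, ψ^l, M^{ik}, M^{il}, M^{lk}, M^{ll} : ℝ² → ℂ be smooth functions of (x,t) satisfying the x-derivative relations M^{ik}_x = ψ^iφ^k, M^{il}_x = ψ^iφ^l, M^{lk}_x = ψ^lφ^k, M^{ll}_x = ψ^lφ^l, with M^{ll} nowhere zero. Define the transformed eigenfunctions φ^k_l = φ^k − φ^l·M^{lk}/M^{ll}, ψ^i_l = ψ^i − ψ^l·M^{il}/M^{ll} and the superposed potential M^{ik}_l = M^{ik} − M^{il}M^{lk}/M^{ll}. Then ∂_x(M^{ik}_l) = ψ^i_l·φ^k_l, i.e. M^{ik}_l is (up to a constant of integration) the bilinear potential associated with the new pair of eigenfunctions. -/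

import Mathlib

/-- The partial derivative with respect to `x` of a function of `(x, t)`. -/
noncomputable def dx (f : ℝ → ℝ → ℂ) : ℝ → ℝ → ℂ :=
  fun x t => deriv (fun y => f y t) x

lemma hasDerivAt_slice {f : ℝ → ℝ → ℂ} (hf : ContDiff ℝ (⊤ : ℕ∞) (Function.uncurry f))
    (x t : ℝ) : HasDerivAt (fun y => f y t) (dx f x t) x := by
  have hd : Differentiable ℝ (fun y => f y t) := by
    have : (fun y => f y t) = Function.uncurry f ∘ (fun y => (y, t)) := rfl
    rw [this]
    exact hf.differentiable (by simp) |>.comp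
      (differentiable_id.prodMk (differentiable_const t))
  exact (hd x).hasDerivAt

/-- Superposition principle for bilinear potentials: if `M^{ik}_x = ψ^iφ^k`,
`M^{il}_x = ψ^iφ^l`, `M^{lk}_x = ψ^lφ^k`, `M^{ll}_x = ψ^lφ^l` with `M^{ll}`
nowhere zero, then the superposed potential
`M^{ik}_l = M^{ik} − M^{il}M^{lk}/M^{ll}` satisfies
`∂_x(M^{ik}_l) = ψ^i_l·φ^k_l`, where `φ^k_l = φ^k − φ^l·M^{lk}/M^{ll}` and
`ψ^i_l = ψ^i − ψ^l·M^{il}/M^{ll}` are the transformed eigenfunctions. -/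
theorem superposition_bilinear_potential (φk φl ψi ψl Mik Mil Mlk Mll : ℝ → ℝ → ℂ)
    (hφk : ContDiff ℝ (⊤ : ℕ∞) (Function.uncurry φk))
    (hφl : ContDiff ℝ (⊤ : ℕ∞) (Function.uncurry φl))
    (hψi : ContDiff ℝ (⊤ : ℕ∞) (Function.uncurry ψi))
    (hψl : ContDiff ℝ (⊤ : ℕ∞) (Function.uncurry ψl))
    (hMik : ContDiff ℝ (⊤ : ℕ∞) (Function.uncurry Mik))
    (hMil : ContDiff ℝ (⊤ : ℕ∞) (Function.uncurry Mil))
    (hMlk : ContDiff ℝ (⊤ : ℕ∞) (Function.uncurry Mlk))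
    (hMll : ContDiff ℝ (⊤ : ℕ∞) (Function.uncurry Mll))
    (hMikx : ∀ x t, dx Mik x t = ψi x t * φk x t)
    (hMilx : ∀ x t, dx Mil x t = ψi x t * φl x t)
    (hMlkx : ∀ x t, dx Mlk x t = ψl x t * φk x t)
    (hMllx : ∀ x t, dx Mll x t = ψl x t * φl x t)
    (hMll0 : ∀ x t, Mll x t ≠ 0) :
    ∀ x t, dx (fun y s => Mik y s - Mil y s * Mlk y s / Mll y s) x t
      = (ψi x t - ψl x t * Mil x t / Mll x t)
        * (φk x t - φl x t * Mlk x t / Mll x t) := by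
  intro x t
  have hik := hasDerivAt_slice hMik x t
  have hil := hasDerivAt_slice hMil x t
  have hlk := hasDerivAt_slice hMlk x t
  have hll := hasDerivAt_slice hMll x t
  have h := hik.sub (((hil.mul hlk).div hll (hMll0 x t)))
  simp only [dx]
  rw [show (fun y => Mik y t - Mil y t * Mlk y t / Mll y t) = ((fun y => Mik y t) - ((fun y => Mil y t) * fun y => Mlk y t) / fun y => Mll y t) from rfl, h.deriv, hMikx, hMilx, hMlkx, hMllx]
  field_simp [hMll0 x t]
  simp only [Pi.mul_apply]
  ring
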